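/- The monoid ⟨a, b | ab = a⟩ is an automaton monoid. Precisely, let Γ = {𝟙, a, b} and let N̄ : Γ×Γ → Γ×Γ be defined by N̄(a,b) = (𝟙,a), N̄(a,𝟙) = (𝟙,a), N̄(b,𝟙) = (𝟙,b), and N̄(x,y) = (x,y) for all other pairs. Then for all words u, v over Γ, the production functions σ_u and σ_v are equal as functions List Γ → List Γ if and only if (u, v) lies in the monoid congruence on the free monoid over Γ generated by the pairs ([𝟙], ε) and ([a,b], [a]); hence the monoid generated by this Mealy automaton is isomorphic to the monoid presented by ⟨a, b | ab = a⟩. -/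

import Mathlib

namespace Stmt14

variable {α : Type}

/-- Production function of the Mealy automaton associated with
`N̄(a,b) = (τ_a(b), σ_b(a))`: `σ_x([]) = []`,
`σ_x(i :: s) = σ_x(i) :: σ_{τ_i(x)}(s)`. -/
def prodFn (Nb : α → α → α × α) : α → List α → List α
  | _, [] => []
  | x, i :: s => (Nb i x).2 :: prodFn Nb ((Nb i x).1) s

/-- Production function of a word `u = x₁⋯xₙ`: `σ_u = σ_{xₙ} ∘ ⋯ ∘ σ_{x₁}`. -/
def prodWord (Nb : α → α → α × α) : List α → List α → List α
  | [], s => s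
  | x :: u, s => prodWord Nb u (prodFn Nb x s)

/-- The alphabet `Γ = {𝟙, a, b}`. -/
inductive Γ : Type
  | one : Γ
  | a : Γ
  | b : Γ
  deriving DecidableEq

instance : Fintype Γ where
  elems := {Γ.one, Γ.a, Γ.b}
  complete := by intro x; cases x <;> simp

/-- The two-letter normalisation of the monoid `⟨a, b | ab = a⟩`:
`N̄(a,b) = (𝟙,a)`, `N̄(a,𝟙) = (𝟙,a)`, `N̄(b,𝟙) = (𝟙,b)`, identity otherwise. -/
def bsNb : Γ → Γ → Γ × Γ
  | .a, .b => (.one, .a)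
  | .a, .one => (.one, .a)
  | .b, .one => (.one, .b)
  | x, y => (x, y)

/-- The defining relations of `⟨a, b | ab = a⟩` with an adjoined unit letter `𝟙`:
`[𝟙] ~ ε` and `[a,b] ~ [a]`. -/
def bsRel : FreeMonoid Γ → FreeMonoid Γ → Prop :=
  fun u v =>
    (u = FreeMonoid.ofList [Γ.one] ∧ v = 1) ∨
      (u = FreeMonoid.ofList [Γ.a, Γ.b] ∧ v = FreeMonoid.ofList [Γ.a])

/-! The production functions give an anti-homomorphism `u ↦ σ_u` from the free monoid to the
endofunctions of `List Γ`. Since `σ_𝟙 = id` and `σ_b ∘ σ_a = σ_a`, its kernel contains the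
congruence. Conversely, modulo the relations every word equals a normal form `b^k a^m` (an `a`
absorbs the `b`s to its right), and `σ_{b^k a^m}` sends `𝟙^{k+m} t` to `a^m b^k t`, so distinct
normal forms have distinct production functions. -/

open FreeMonoid List

section Automaton

variable (Nb : α → α → α × α)

/-- `σ_{uv} = σ_v ∘ σ_u`, hence the opposite monoid. -/
def prodHom : FreeMonoid α →* (Function.End (List α))ᵐᵒᵖ :=
  FreeMonoid.lift fun x => .op (prodFn Nb x)

theorem unop_prodHom_ofList (u : List α) : (prodHom Nb (ofList u)).unop = prodWord Nb u := by
  induction u with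
  | nil => rfl
  | cons x u ih =>
    funext s
    rw [ofList_cons, map_mul, MulOpposite.unop_mul, ih]
    rfl

theorem unop_prodHom_of_pow (x : α) (k : ℕ) :
    (prodHom Nb (of x ^ k)).unop = (prodFn Nb x)^[k] := by
  rw [map_pow, MulOpposite.unop_pow]
  rfl

end Automaton

theorem Con.ker_eq_of_le_of_injOn {M N : Type*} [Monoid M] [Monoid N] {f : M →* N} {c : Con M}
    (hle : c ≤ Con.ker f) {S : Set M} (hS : ∀ x, ∃ s ∈ S, c x s) (hinj : Set.InjOn f S) :
    Con.ker f = c := by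
  refine le_antisymm (fun x y hxy => ?_) hle
  obtain ⟨s, hs, hxs⟩ := hS x
  obtain ⟨t, ht, hyt⟩ := hS y
  have hst : s = t := hinj hs ht <| by
    rw [← (Con.ker_rel f).mp (hle hxs), ← (Con.ker_rel f).mp (hle hyt)]
    exact (Con.ker_rel f).mp hxy
  exact c.trans hxs (hst ▸ c.symm hyt)

theorem prodFn_bsNb_one (s : List Γ) : prodFn bsNb .one s = s := by
  induction s with
  | nil => rfl
  | cons i s ih => cases i <;> simp [prodFn, bsNb, ih]

theorem prodFn_bsNb_b_comp_a (s : List Γ) :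
    prodFn bsNb .b (prodFn bsNb .a s) = prodFn bsNb .a s := by
  cases s with
  | nil => rfl
  | cons i t => cases i <;> simp [prodFn, bsNb, prodFn_bsNb_one]

theorem conGen_bsRel_le_ker : conGen bsRel ≤ Con.ker (prodHom bsNb) := by
  rw [Con.conGen_le]
  rintro _ _ (⟨rfl, rfl⟩ | ⟨rfl, rfl⟩) <;>
    refine (Con.ker_rel _).mpr (MulOpposite.unop_injective ?_) <;> funext s
  · exact prodFn_bsNb_one s
  · exact prodFn_bsNb_b_comp_a s

theorem exists_conGen_bsRel_normalForm (x : FreeMonoid Γ) :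
    ∃ k m : ℕ, conGen bsRel x (of .b ^ k * of .a ^ m) := by
  set c := conGen bsRel
  have one_eq : c.mk' (of .one) = 1 := c.eq.mpr (ConGen.Rel.of _ _ (.inl ⟨rfl, rfl⟩))
  have ab_eq : c.mk' (of .a) * c.mk' (of .b) = c.mk' (of .a) :=
    c.eq.mpr (ConGen.Rel.of _ _ (.inr ⟨rfl, rfl⟩))
  have a_bpow_eq (k : ℕ) : c.mk' (of .a) * c.mk' (of .b) ^ k = c.mk' (of .a) := by
    induction k with
    | zero => exact mul_one _
    | succ k ih => rw [pow_succ, ← mul_assoc, ih, ab_eq]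
  simp only [← c.mk'_ker, Con.ker_rel, map_mul, map_pow]
  induction x using FreeMonoid.inductionOn' with
  | one => exact ⟨0, 0, by simp⟩
  | of_mul x w ih =>
    obtain ⟨k, m, h⟩ := ih
    rw [map_mul, h]
    cases x with
    | one => exact ⟨k, m, by rw [one_eq, one_mul]⟩
    | a => exact ⟨0, m + 1, by rw [← mul_assoc, a_bpow_eq, pow_zero, one_mul, pow_succ']⟩
    | b => exact ⟨k + 1, m, by rw [← mul_assoc, pow_succ']⟩

theorem prodFn_bsNb_b_replicate (k : ℕ) (t : List Γ) :
    prodFn bsNb .b (replicate k .b ++ .one :: t) = replicate (k + 1) .b ++ t := by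
  induction k with
  | zero => simp [prodFn, bsNb, prodFn_bsNb_one]
  | succ k ih => simp [replicate_succ, prodFn, bsNb, ih]

theorem prodFn_bsNb_a_replicate (p k : ℕ) (t : List Γ) :
    prodFn bsNb .a (replicate p .a ++ replicate k .b ++ .one :: t) =
      replicate (p + 1) .a ++ replicate k .b ++ t := by
  induction p with
  | zero =>
    cases k with
    | zero => simp [prodFn, bsNb, prodFn_bsNb_one]
    | succ k => simp [replicate_succ, prodFn, bsNb, prodFn_bsNb_b_replicate]
  | succ p ih => simp only [replicate_succ, cons_append, prodFn, bsNb, ih]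

theorem iterate_prodFn_bsNb_b (k j : ℕ) (t : List Γ) :
    (prodFn bsNb .b)^[k] (replicate j .b ++ replicate k .one ++ t) = replicate (j + k) .b ++ t := by
  induction k generalizing j with
  | zero => simp
  | succ k ih =>
    rw [Function.iterate_succ_apply, replicate_succ, append_assoc, cons_append,
      prodFn_bsNb_b_replicate, ← append_assoc, ih, add_right_comm, add_assoc]

theorem iterate_prodFn_bsNb_a (m p k : ℕ) (t : List Γ) :
    (prodFn bsNb .a)^[m] (replicate p .a ++ replicate k .b ++ replicate m .one ++ t) =
      replicate (p + m) .a ++ replicate k .b ++ t := by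
  induction m generalizing p with
  | zero => simp
  | succ m ih =>
    rw [Function.iterate_succ_apply, replicate_succ, append_assoc, cons_append,
      prodFn_bsNb_a_replicate, ← append_assoc, ih, add_right_comm, add_assoc]

theorem unop_prodHom_bsNb_normalForm_apply (k m : ℕ) (t : List Γ) :
    (prodHom bsNb (of .b ^ k * of .a ^ m)).unop (replicate (k + m) .one ++ t) =
      replicate m .a ++ replicate k .b ++ t := by
  have hb := iterate_prodFn_bsNb_b k 0 (replicate m .one ++ t)
  have ha := iterate_prodFn_bsNb_a m 0 k t
  simp only [replicate_zero, nil_append, zero_add, ← append_assoc] at hb ha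
  rw [map_mul, MulOpposite.unop_mul, unop_prodHom_of_pow, unop_prodHom_of_pow, replicate_add]
  exact (congrArg _ hb).trans ha

theorem injOn_prodHom_bsNb :
    Set.InjOn (prodHom bsNb) (Set.range fun km : ℕ × ℕ => of .b ^ km.1 * of .a ^ km.2) := by
  rintro _ ⟨⟨k, m⟩, rfl⟩ _ ⟨⟨k', m'⟩, rfl⟩ h
  dsimp only at h ⊢
  have key : (prodHom bsNb (of .b ^ k * of .a ^ m)).unop
        (replicate (k + m) .one ++ replicate (k' + m') .one) =
      (prodHom bsNb (of .b ^ k' * of .a ^ m')).unop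
        (replicate (k' + m') .one ++ replicate (k + m) .one) := by
    rw [h, ← replicate_add, ← replicate_add, add_comm]
  rw [unop_prodHom_bsNb_normalForm_apply, unop_prodHom_bsNb_normalForm_apply] at key
  obtain rfl : m = m' := by simpa [count_replicate] using congrArg (List.count Γ.a) key
  obtain rfl : k = k' := by simpa [count_replicate] using congrArg (List.count Γ.b) key
  rfl

theorem ker_prodHom_bsNb : Con.ker (prodHom bsNb) = conGen bsRel :=
  Con.ker_eq_of_le_of_injOn conGen_bsRel_le_ker
    (fun x => by
      obtain ⟨k, m, h⟩ := exists_conGen_bsRel_normalForm x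
      exact ⟨_, ⟨(k, m), rfl⟩, h⟩)
    injOn_prodHom_bsNb

/-- Example `ex-bsOneZero`: the monoid `⟨a, b | ab = a⟩` is an
automaton monoid: two words over `Γ = {𝟙, a, b}` induce the same production function of
the Mealy automaton iff they are congruent modulo the relations `𝟙 = ε` and `ab = a`;
hence the monoid generated by this Mealy automaton is isomorphic to `⟨a, b | ab = a⟩`. -/
theorem bsOneZero_automaton_monoid :
    ∀ u v : List Γ, prodWord bsNb u = prodWord bsNb v ↔
      conGen bsRel (FreeMonoid.ofList u) (FreeMonoid.ofList v) := by
  intro u v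
  rw [← ker_prodHom_bsNb, Con.ker_rel, ← MulOpposite.unop_inj, unop_prodHom_ofList,
    unop_prodHom_ofList]
  exact Iff.rfl

end Stmt14
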